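/- A generator of the cokernel ℤ^{m-1}/M(ℤ^{m-1}) ≅ ℤ/mℤ (with M the matrix of the type A_{m-1} example) is given by the image of the vector (0, …, 0, -1). -/
import Mathlib


/-- The matrix of the type A_{m-1} example: -2 in entry (1,1), -1 in the rest of the
first column, 1 on the superdiagonal, -1 on the rest of the diagonal, 0 elsewhere. -/
def typeAMatrix (m : ℕ) : Matrix (Fin (m - 1)) (Fin (m - 1)) ℤ :=
  fun i j =>
    if i.val = 0 ∧ j.val = 0 then -2
    else if j.val = 0 then -1
    else if j.val = i.val + 1 then 1
    else if i = j then -1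
    else 0

/-- The image of the vector (0, …, 0, -1) generates the cokernel ℤ^{m-1}/M(ℤ^{m-1}). -/
theorem cokernel_typeAMatrix_generator (m : ℕ) (hm : 2 ≤ m) :
    Submodule.span ℤ
      {Submodule.Quotient.mk (p := LinearMap.range (Matrix.mulVecLin (typeAMatrix m)))
        (fun i : Fin (m - 1) => if i.val = m - 2 then (-1 : ℤ) else 0)} = ⊤ := by
  obtain ⟨n, rfl⟩ : ∃ n, m = n + 2 := ⟨m - 2, by omega⟩
  show Submodule.span ℤ
      {Submodule.Quotient.mk (p := LinearMap.range (Matrix.mulVecLin (typeAMatrix (n + 2))))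
        (fun i : Fin (n + 1) => if i.val = n then (-1 : ℤ) else 0)} = ⊤
  set M := typeAMatrix (n + 2) with hM
  set p : Submodule ℤ (Fin (n + 1) → ℤ) := LinearMap.range M.mulVecLin with hp
  set v : Fin (n + 1) → ℤ := fun i => if i.val = n then (-1 : ℤ) else 0 with hv
  -- columns of M are in the range
  have col_mem : ∀ c : Fin (n + 1), (fun k => M k c) ∈ p := by
    intro c
    exact ⟨Pi.single c 1, by
      ext k
      simp [Matrix.mulVecLin_apply, Matrix.mulVec_single]⟩
  -- all standard basis vectors are in S := span {v} ⊔ p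
  have basis_mem : ∀ j : ℕ, j ≤ n →
      (fun k : Fin (n + 1) => if k.val = n - j then (1 : ℤ) else 0) ∈
        Submodule.span ℤ {v} ⊔ p := by
    intro j
    induction j with
    | zero =>
      intro _
      have hvmem : v ∈ Submodule.span ℤ {v} ⊔ p :=
        Submodule.mem_sup_left (Submodule.mem_span_singleton_self v)
      have := Submodule.neg_mem _ hvmem
      convert this using 1
      funext k
      simp [hv]
      split <;> simp
    | succ j ih =>
      intro hj
      have ihm := ih (by omega)
      -- column index n - j (which is ≥ 1)
      have hlt : n - j < n + 1 := by omega
      have hcol := col_mem ⟨n - j, hlt⟩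
      have heq : (fun k : Fin (n + 1) => if k.val = n - (j + 1) then (1 : ℤ) else 0) =
          (fun k : Fin (n + 1) => M k ⟨n - j, hlt⟩) +
            (fun k : Fin (n + 1) => if k.val = n - j then (1 : ℤ) else 0) := by
        funext k
        have hk := k.isLt
        simp only [Pi.add_apply, hM, typeAMatrix, Fin.ext_iff]
        split_ifs <;> omega
      rw [heq]
      exact Submodule.add_mem _ (Submodule.mem_sup_right hcol) ihm
  have key : p ⊔ Submodule.span ℤ {v} = ⊤ := by
    rw [eq_top_iff]
    intro x _
    rw [pi_eq_sum_univ x]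
    refine Submodule.sum_mem _ fun i _ => Submodule.smul_mem _ _ ?_
    have := basis_mem (n - i.val) (by omega)
    have hni : n - (n - i.val) = i.val := by omega
    rw [hni] at this
    have heq : (fun k : Fin (n + 1) => if k.val = i.val then (1 : ℤ) else 0) =
        (fun j : Fin (n + 1) => if i = j then (1 : ℤ) else 0) := by
      funext k; simp [Fin.ext_iff, eq_comm]
    rw [heq] at this
    rw [sup_comm] at this
    exact this
  have : ({Submodule.Quotient.mk (p := p) v} : Set ((Fin (n+1) → ℤ) ⧸ p)) = p.mkQ '' {v} := by
    simp
  rw [this, ← Submodule.map_span, Submodule.map_mkQ_eq_top, key]
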